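/- With Y multiplication by x, Z the formal derivative on ℂ[x], H = Y∘Z, G = R(H)∘Z for a fixed polynomial R of degree d, and P_n^R = e^G(x^n): the operator G is a lowering operator, G(P_n^R) = n·R(n−1)·P_{n−1}^R for all n ≥ 1 and G(P_0^R) = 0; the operator M = e^G∘Y∘e^{−G} is a raising operator, M(P_n^R) = P_{n+1}^R for all n ∈ ℕ; and the Rodrigues-type formula P_n^R = M^n(1) holds. -/

import Mathlib

open Polynomial Finset

noncomputable section

/-- `E` is the ℂ-algebra of ℂ-linear endomorphisms of `ℂ[x]`. -/
abbrev E := Module.End ℂ (Polynomial ℂ)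

/-- `Y`: multiplication by `x`. -/
def Yop : E := LinearMap.mulLeft ℂ (X : Polynomial ℂ)

/-- `Z`: the formal derivative. -/
def Zop : E := Polynomial.derivative

/-- `H = Y ∘ Z`. -/
def Hop : E := Yop * Zop

/-- `G = R(H) ∘ Z`. -/
def Gop (R : Polynomial ℂ) : E := aeval Hop R * Zop

/-- `e^A p = Σ_{j≥0} A^j p / j!` for a degree-lowering operator `A`;
the series is the finite sum over `j ≤ deg p`. -/
def expOp (A : E) (p : Polynomial ℂ) : Polynomial ℂ :=
  ∑ j ∈ range (p.natDegree + 1), (j.factorial : ℂ)⁻¹ • (A ^ j) p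

/-- `P_n^R = e^G(x^n)`. -/
def PR (R : Polynomial ℂ) (n : ℕ) : Polynomial ℂ :=
  expOp (Gop R) (X ^ n : Polynomial ℂ)

/-- The raising operator `M = e^G ∘ Y ∘ e^{−G}`. -/
def Mop (R : Polynomial ℂ) : Polynomial ℂ → Polynomial ℂ :=
  fun p => expOp (Gop R) (X * expOp (-(Gop R)) p)

open scoped Nat

/-!
`H` acts on `X ^ m` as the scalar `m`, so `R(H)` acts as `R(m)` and `G (X ^ n)` is a multiple of
`X ^ (n - 1)`. Hence `G` lowers degrees, and on the polynomials of degree `< N` it is nilpotent,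
with `e^G` restricting to its nilpotent exponential; there `e^{-G} e^G = 1`. This gives
`M (e^G X ^ n) = e^G (X ^ (n + 1))`, while `G` commutes with `e^G`, so
`G (e^G X ^ n) = e^G (G (X ^ n))`.
-/

def LowersDegree (A : E) : Prop :=
  ∀ n, ∀ p ∈ degreeLT ℂ (n + 1), A p ∈ degreeLT ℂ n

lemma mem_degreeLT_natDegree_succ (p : ℂ[X]) : p ∈ degreeLT ℂ (p.natDegree + 1) :=
  mem_degreeLT.2 <| degree_le_natDegree.trans_lt <| by exact_mod_cast Nat.lt_succ_self _

lemma expOp_smul (A : E) (c : ℂ) (p : ℂ[X]) : expOp A (c • p) = c • expOp A p := by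
  rcases eq_or_ne c 0 with rfl | hc
  · simp [expOp]
  · simp only [expOp, natDegree_smul p hc, smul_sum, map_smul, smul_comm c]

namespace LowersDegree

variable {A : E} (hA : LowersDegree A)
include hA

lemma neg : LowersDegree (-A) := fun n p hp => neg_mem (hA n p hp)

lemma apply_mem {n : ℕ} {p : ℂ[X]} (hp : p ∈ degreeLT ℂ n) : A p ∈ degreeLT ℂ n :=
  hA n p <| degreeLT_mono n.le_succ hp

lemma pow_apply_mem (j : ℕ) {n : ℕ} {p : ℂ[X]} (hp : p ∈ degreeLT ℂ (n + j)) :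
    (A ^ j) p ∈ degreeLT ℂ n := by
  induction j generalizing n with
  | zero => simpa using hp
  | succ j ih =>
    rw [pow_succ', Module.End.mul_apply]
    exact hA n _ <| ih <| by rwa [Nat.add_right_comm]

lemma pow_apply_eq_zero {j : ℕ} {p : ℂ[X]} (hp : p ∈ degreeLT ℂ j) : (A ^ j) p = 0 := by
  simpa [mem_degreeLT] using hA.pow_apply_mem j (n := 0) (by rwa [zero_add])

lemma expOp_eq_sum {N : ℕ} {p : ℂ[X]} (hp : p ∈ degreeLT ℂ N) :
    expOp A p = ∑ j ∈ range N, (j ! : ℂ)⁻¹ • (A ^ j) p := by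
  have extend : ∀ {M N}, M ≤ N → p ∈ degreeLT ℂ M →
      ∑ j ∈ range M, (j ! : ℂ)⁻¹ • (A ^ j) p =
        ∑ j ∈ range N, (j ! : ℂ)⁻¹ • (A ^ j) p :=
    fun hMN hM => sum_subset (range_subset_range.2 hMN) fun j _ hj => by
      rw [hA.pow_apply_eq_zero (degreeLT_mono (by simpa using hj) hM), smul_zero]
  rcases le_total (p.natDegree + 1) N with h | h
  · exact extend h (mem_degreeLT_natDegree_succ p)
  · exact (extend h hp).symm

lemma apply_expOp (p : ℂ[X]) : A (expOp A p) = expOp A (A p) := by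
  have hp := mem_degreeLT_natDegree_succ p
  rw [hA.expOp_eq_sum hp, hA.expOp_eq_sum (hA.apply_mem hp), map_sum]
  refine sum_congr rfl fun j _ => ?_
  rw [map_smul, ← Module.End.mul_apply, ← Module.End.mul_apply, ← pow_succ', ← pow_succ]

lemma restrict_pow_eq_zero (N : ℕ) :
    (A.restrict fun _ => hA.apply_mem (n := N)) ^ N = 0 :=
  LinearMap.ext fun ⟨p, hp⟩ => Subtype.ext <| by
    rw [Module.End.pow_restrict, LinearMap.restrict_apply]
    exact hA.pow_apply_eq_zero hp

lemma expOp_eq_exp_restrict {N : ℕ} {p : ℂ[X]} (hp : p ∈ degreeLT ℂ N) :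
    expOp A p = IsNilpotent.exp (A.restrict fun _ => hA.apply_mem (n := N)) ⟨p, hp⟩ := by
  rw [hA.expOp_eq_sum hp, IsNilpotent.exp_eq_sum (hA.restrict_pow_eq_zero N),
    LinearMap.sum_apply, Submodule.coe_sum]
  refine sum_congr rfl fun j _ => ?_
  rw [LinearMap.smul_apply, Submodule.coe_smul_of_tower, Module.End.pow_restrict,
    LinearMap.restrict_apply, ← algebraMap_smul ℂ ((j ! : ℚ)⁻¹)]
  simp

lemma expOp_neg_expOp (p : ℂ[X]) : expOp (-A) (expOp A p) = p := by
  have hp := mem_degreeLT_natDegree_succ p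
  set a := A.restrict fun _ => hA.apply_mem (n := p.natDegree + 1)
  have hneg : (-A).restrict (fun _ => hA.neg.apply_mem) = -a := rfl
  rw [hA.expOp_eq_exp_restrict hp, hA.neg.expOp_eq_exp_restrict (Submodule.coe_mem _), hneg,
    Subtype.coe_eta, ← Module.End.mul_apply,
    IsNilpotent.exp_neg_mul_exp_self ⟨_, hA.restrict_pow_eq_zero _⟩, Module.End.one_apply]

end LowersDegree

lemma lowersDegree_of_apply_X_pow_mem {A : E} (h : ∀ n, A (X ^ n) ∈ degreeLT ℂ n) :
    LowersDegree A := by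
  classical
  intro n p hp
  have hmap : (degreeLT ℂ (n + 1)).map A ≤ degreeLT ℂ n := by
    rw [degreeLT_eq_span_X_pow, Submodule.map_span_le]
    simp only [coe_image, coe_range, Set.mem_image, Set.mem_Iio]
    rintro _ ⟨m, hm, rfl⟩
    exact degreeLT_mono (Nat.lt_succ_iff.1 hm) (h m)
  exact hmap (Submodule.mem_map_of_mem hp)

lemma Hop_X_pow (m : ℕ) : Hop (X ^ m) = (m : ℂ) • X ^ m := by
  show X * derivative (X ^ m) = _
  rw [derivative_X_pow, smul_eq_C_mul]
  cases m with
  | zero => simp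
  | succ m => rw [Nat.add_sub_cancel]; ring

lemma aeval_Hop_X_pow (R : ℂ[X]) (m : ℕ) : aeval Hop R (X ^ m) = R.eval (m : ℂ) • X ^ m :=
  Module.End.aeval_apply_of_mem_apply_eq_smul (Hop_X_pow m)

lemma Gop_X_pow (R : ℂ[X]) (n : ℕ) :
    Gop R (X ^ n) = ((n : ℂ) * R.eval ((n : ℂ) - 1)) • X ^ (n - 1) := by
  show aeval Hop R (derivative (X ^ n)) = _
  rw [derivative_X_pow, ← smul_eq_C_mul, map_smul, aeval_Hop_X_pow]
  cases n with
  | zero => simp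
  | succ n => rw [smul_smul, Nat.add_sub_cancel]; push_cast; ring_nf

lemma lowersDegree_Gop (R : ℂ[X]) : LowersDegree (Gop R) := by
  refine lowersDegree_of_apply_X_pow_mem fun n => ?_
  rw [Gop_X_pow]
  cases n with
  | zero => simp
  | succ n =>
    refine Submodule.smul_mem _ _ (mem_degreeLT.2 ?_)
    rw [Nat.add_sub_cancel, degree_X_pow]
    exact_mod_cast n.lt_succ_self

lemma PR_zero (R : ℂ[X]) : PR R 0 = 1 := by
  simp [PR, expOp]

lemma Gop_PR (R : ℂ[X]) (n : ℕ) :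
    Gop R (PR R n) = ((n : ℂ) * R.eval ((n : ℂ) - 1)) • PR R (n - 1) := by
  rw [PR, (lowersDegree_Gop R).apply_expOp, Gop_X_pow, expOp_smul, PR]

lemma Mop_PR (R : ℂ[X]) (n : ℕ) : Mop R (PR R n) = PR R (n + 1) := by
  rw [Mop, PR, (lowersDegree_Gop R).expOp_neg_expOp, ← pow_succ', PR]

theorem PR_ladder_general (R : Polynomial ℂ) :
    (∀ n : ℕ, 1 ≤ n →
      Gop R (PR R n) = ((n : ℂ) * R.eval ((n : ℂ) - 1)) • PR R (n - 1)) ∧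
    Gop R (PR R 0) = 0 ∧
    (∀ n : ℕ, Mop R (PR R n) = PR R (n + 1)) ∧
    (∀ n : ℕ, (Mop R)^[n] (1 : Polynomial ℂ) = PR R n) := by
  refine ⟨fun n _ => Gop_PR R n, by simpa using Gop_PR R 0, Mop_PR R, fun n => ?_⟩
  induction n with
  | zero => exact (PR_zero R).symm
  | succ n ih => rw [Function.iterate_succ_apply', ih, Mop_PR]

/-- Ladder operators and the Rodrigues-type formula for the `P_n^R`. -/
theorem PR_ladder (R : Polynomial ℂ) (d : ℕ) (hR : R.natDegree = d) :
    (∀ n : ℕ, 1 ≤ n →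
      Gop R (PR R n) = ((n : ℂ) * R.eval ((n : ℂ) - 1)) • PR R (n - 1)) ∧
    Gop R (PR R 0) = 0 ∧
    (∀ n : ℕ, Mop R (PR R n) = PR R (n + 1)) ∧
    (∀ n : ℕ, (Mop R)^[n] (1 : Polynomial ℂ) = PR R n) :=
  PR_ladder_general R

end
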